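/- arXiv:1412.0515 — 2 statements merged into one kernel-verified Lean document; each statement's English description precedes it below -/
import Mathlib

section
/- Let k, k', k'' be nonnegative integers with k' ≥ 1. Let G be a finite simple graph of order n and size m with minimum degree δ(G) ≥ k, and suppose G has at least one vertex of degree at least k'+k''. Let δ* = min{deg(v) : v ∈ V(G), deg(v) ≥ k'+k''}. Then γ_{(k,k',k'')}(G) ≥ ((k' + δ*)·n − 2m)/(δ* + k' − k). -/
/-!
Let `S` be a minimum `(k,k',k'')`-dominating set. Every vertex of `S` has at least `k`
neighbours inside `S`, and every vertex outside `S` has at least `k'` neighbours in `S` and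
at least `k''` outside, hence degree at least `k' + k''` and so at least `δ*`. Counting degrees,
with the edges between `S` and its complement counted once from each side, gives
`2m ≥ k |S| + k' (n - |S|) + δ* (n - |S|)`, which rearranges to the bound.
-/

open Finset

/-- A set `S` of vertices is a `(k,k',k'')`-dominating set if every vertex in `S` has at
least `k` neighbors in `S`, and every vertex not in `S` has at least `k'` neighbors in `S`
and at least `k''` neighbors outside `S`. -/
def SimpleGraph.IsKkkDomSet {V : Type*} [Fintype V] [DecidableEq V] (G : SimpleGraph V)
    [DecidableRel G.Adj] (k k' k'' : ℕ) (S : Finset V) : Prop :=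
  (∀ v ∈ S, k ≤ (G.neighborFinset v ∩ S).card) ∧
  (∀ v ∉ S, k' ≤ (G.neighborFinset v ∩ S).card ∧ k'' ≤ (G.neighborFinset v \ S).card)

/-- The `(k,k',k'')`-domination number: the minimum cardinality of a
`(k,k',k'')`-dominating set. -/
noncomputable def SimpleGraph.kkkDomNum {V : Type*} [Fintype V] [DecidableEq V]
    (G : SimpleGraph V) [DecidableRel G.Adj] (k k' k'' : ℕ) : ℕ :=
  sInf {n | ∃ S : Finset V, G.IsKkkDomSet k k' k'' S ∧ S.card = n}

namespace SimpleGraph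

variable {V : Type*} [Fintype V] [DecidableEq V] (G : SimpleGraph V) [DecidableRel G.Adj]

lemma card_neighborFinset_inter_add_card_sdiff (v : V) (S : Finset V) :
    #(G.neighborFinset v ∩ S) + #(G.neighborFinset v \ S) = G.degree v := by
  rw [card_inter_add_card_sdiff, card_neighborFinset_eq_degree]

lemma sum_card_neighborFinset_sdiff_eq_sum_card_compl_inter (S : Finset V) :
    ∑ v ∈ S, #(G.neighborFinset v \ S) = ∑ v ∈ Sᶜ, #(G.neighborFinset v ∩ S) := by
  convert sum_card_bipartiteAbove_eq_sum_card_bipartiteBelow (s := S) (t := Sᶜ) (r := G.Adj)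
    using 3 with v _ v _
  · ext u; simp [bipartiteAbove, and_comm]
  · ext u; simp [bipartiteBelow, and_comm, adj_comm]

variable {G}

lemma IsKkkDomSet.mul_card_add_mul_card_compl_le {k k' k'' d : ℕ} {S : Finset V}
    (hS : G.IsKkkDomSet k k' k'' S) (hd : ∀ v, k' + k'' ≤ G.degree v → d ≤ G.degree v) :
    k * #S + (k' + d) * #Sᶜ ≤ 2 * #G.edgeFinset := by
  have hin : k * #S + ∑ v ∈ S, #(G.neighborFinset v \ S) ≤ ∑ v ∈ S, G.degree v := by
    rw [mul_comm, ← smul_eq_mul, ← sum_const, ← sum_add_distrib]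
    refine sum_le_sum fun v hv => ?_
    rw [← G.card_neighborFinset_inter_add_card_sdiff v S]
    exact Nat.add_le_add_right (hS.1 v hv) _
  have hcross : k' * #Sᶜ ≤ ∑ v ∈ S, #(G.neighborFinset v \ S) := by
    rw [sum_card_neighborFinset_sdiff_eq_sum_card_compl_inter, mul_comm, ← smul_eq_mul,
      ← sum_const]
    exact sum_le_sum fun v hv => (hS.2 v (mem_compl.mp hv)).1
  have hout : d * #Sᶜ ≤ ∑ v ∈ Sᶜ, G.degree v := by
    rw [mul_comm, ← smul_eq_mul, ← sum_const]
    refine sum_le_sum fun v hv => hd v ?_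
    obtain ⟨hk', hk''⟩ := hS.2 v (mem_compl.mp hv)
    rw [← G.card_neighborFinset_inter_add_card_sdiff v S]
    exact Nat.add_le_add hk' hk''
  have htotal : ∑ v ∈ S, G.degree v + ∑ v ∈ Sᶜ, G.degree v = 2 * #G.edgeFinset := by
    rw [sum_add_sum_compl, sum_degrees_eq_twice_card_edges]
  linarith

lemma isKkkDomSet_univ {k : ℕ} (hδ : ∀ v, k ≤ G.degree v) (k' k'' : ℕ) :
    G.IsKkkDomSet k k' k'' univ :=
  ⟨fun v _ => by simpa using hδ v, fun v hv => absurd (mem_univ v) hv⟩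

lemma exists_isKkkDomSet_card_eq_kkkDomNum {k : ℕ} (hδ : ∀ v, k ≤ G.degree v) (k' k'' : ℕ) :
    ∃ S, G.IsKkkDomSet k k' k'' S ∧ #S = G.kkkDomNum k k' k'' :=
  Nat.sInf_mem (s := {n | ∃ S, G.IsKkkDomSet k k' k'' S ∧ #S = n})
    ⟨_, univ, isKkkDomSet_univ hδ k' k'', rfl⟩

end SimpleGraph

theorem stmt_0_general {V : Type*} [Fintype V] [DecidableEq V] (G : SimpleGraph V)
    [DecidableRel G.Adj] (k k' k'' : ℕ)
    (hδ : ∀ v : V, k ≤ G.degree v)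
    (hex : ∃ v : V, k' + k'' ≤ G.degree v)
    (δstar : ℕ) (hδstar : δstar = sInf {d : ℕ | ∃ v : V, G.degree v = d ∧ k' + k'' ≤ d}) :
    (((k' : ℝ) + δstar) * Fintype.card V - 2 * G.edgeFinset.card) / ((δstar : ℝ) + k' - k)
      ≤ G.kkkDomNum k k' k'' := by
  obtain ⟨w, hw⟩ := hex
  obtain ⟨u, hu, -⟩ : δstar ∈ {d : ℕ | ∃ v : V, G.degree v = d ∧ k' + k'' ≤ d} :=
    hδstar ▸ Nat.sInf_mem ⟨_, w, rfl, hw⟩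
  have hδstar_le : ∀ v, k' + k'' ≤ G.degree v → δstar ≤ G.degree v :=
    fun v hv => hδstar ▸ Nat.sInf_le ⟨v, rfl, hv⟩
  obtain ⟨S, hS, hScard⟩ := SimpleGraph.exists_isKkkDomSet_card_eq_kkkDomNum hδ k' k''
  have hcount : (k * #S + (k' + δstar) * (Fintype.card V - #S) : ℝ) ≤ 2 * #G.edgeFinset := by
    have := hS.mul_card_add_mul_card_compl_le hδstar_le
    rw [card_compl] at this
    rw [← Nat.cast_sub (card_le_univ S)]
    exact_mod_cast this
  have hkδ : (k : ℝ) ≤ δstar := by exact_mod_cast hu ▸ hδ u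
  rw [← hScard]
  exact div_le_of_le_mul₀ (by linarith) (Nat.cast_nonneg _) (by linarith)

/-- Let k, k', k'' be nonnegative integers with k' ≥ 1, G a finite simple graph of order n
and size m with δ(G) ≥ k, having at least one vertex of degree at least k'+k''.  With
δ* = min{deg v : deg v ≥ k'+k''}, we have
γ_{(k,k',k'')}(G) ≥ ((k' + δ*)·n − 2m)/(δ* + k' − k). -/
theorem stmt_0 {V : Type*} [Fintype V] [DecidableEq V] (G : SimpleGraph V)
    [DecidableRel G.Adj] (k k' k'' : ℕ) (hk' : 1 ≤ k')
    (hδ : ∀ v : V, k ≤ G.degree v)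
    (hex : ∃ v : V, k' + k'' ≤ G.degree v)
    (δstar : ℕ) (hδstar : δstar = sInf {d : ℕ | ∃ v : V, G.degree v = d ∧ k' + k'' ≤ d}) :
    (((k' : ℝ) + δstar) * Fintype.card V - 2 * G.edgeFinset.card) / ((δstar : ℝ) + k' - k)
      ≤ G.kkkDomNum k k' k'' :=
  stmt_0_general G k k' k'' hδ hex δstar hδstar
end

section
/- Let k and k' be positive integers with k' ≥ k + 1, and let G be a finite simple graph of order n with minimum degree δ = δ(G) ≥ k' + 1. Then γ_{(k,k',1)}(G) ≤ n − δ + k' − 1. -/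
/-!
Take a vertex `v` of minimum degree `δ`, a set `A` of `δ - k'` of its neighbours, and let
`S` be the complement of `T = {v} ∪ A`. Every vertex has at least `δ - |T| = k' - 1 ≥ k`
neighbours outside `T`, and a vertex of `T` has at most `|T| - 1` neighbours in `T`, hence at
least `k'` in `S`. Every vertex of `T` also has a neighbour in `T` (`v` for the vertices of
`A`, any vertex of `A ≠ ∅` for `v`), so `S` is `(k,k',1)`-dominating of size `n - δ + k' - 1`.
-/

open Finset

namespace SimpleGraph

variable {V : Type*} [Fintype V] (G : SimpleGraph V) [DecidableRel G.Adj]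

theorem minDegree_le_card_neighborFinset (w : V) : G.minDegree ≤ (G.neighborFinset w).card :=
  G.card_neighborFinset_eq_degree w ▸ G.minDegree_le_degree w

variable [DecidableEq V]

theorem kkkDomNum_le_card {k k' k'' : ℕ} {S : Finset V} (hS : G.IsKkkDomSet k k' k'' S) :
    G.kkkDomNum k k' k'' ≤ S.card :=
  Nat.sInf_le ⟨S, hS, rfl⟩

theorem minDegree_sub_card_le_card_neighborFinset_sdiff (T : Finset V) (w : V) :
    G.minDegree - T.card ≤ (G.neighborFinset w \ T).card := by
  have hδ := G.minDegree_le_card_neighborFinset w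
  have := card_le_card_sdiff_add_card (s := G.neighborFinset w) (t := T)
  omega

theorem minDegree_add_one_sub_card_le_card_neighborFinset_sdiff {T : Finset V} {w : V}
    (hw : w ∈ T) : G.minDegree + 1 - T.card ≤ (G.neighborFinset w \ T).card := by
  have hδ := G.minDegree_le_card_neighborFinset w
  have hinter : (G.neighborFinset w ∩ T).card ≤ (T.erase w).card := by
    refine card_le_card fun x hx => mem_erase.mpr ⟨?_, (mem_inter.mp hx).2⟩
    rintro rfl
    exact G.notMem_neighborFinset_self x (mem_inter.mp hx).1
  rw [card_erase_of_mem hw] at hinter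
  have hT : 0 < T.card := card_pos.mpr ⟨w, hw⟩
  have := card_inter_add_card_sdiff (G.neighborFinset w) T
  omega

theorem isKkkDomSet_compl {k k' : ℕ} {T : Finset V}
    (hT : ∀ u ∈ T, ∃ x ∈ T, G.Adj u x) (hk : T.card + k ≤ G.minDegree)
    (hk' : T.card + k' ≤ G.minDegree + 1) : G.IsKkkDomSet k k' 1 Tᶜ := by
  refine ⟨fun w _ => ?_, fun u hu => ⟨?_, ?_⟩⟩
  · rw [← sdiff_eq_inter_compl]
    have := G.minDegree_sub_card_le_card_neighborFinset_sdiff T w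
    omega
  · rw [notMem_compl] at hu
    rw [← sdiff_eq_inter_compl]
    have := G.minDegree_add_one_sub_card_le_card_neighborFinset_sdiff hu
    omega
  · rw [notMem_compl] at hu
    obtain ⟨x, hxT, hux⟩ := hT u hu
    rw [sdiff_compl, one_le_card]
    exact ⟨x, mem_inter.mpr ⟨(G.mem_neighborFinset u x).mpr hux, hxT⟩⟩

theorem exists_card_eq_forall_exists_adj (v : V) {m : ℕ} (hm : 1 ≤ m) (hmv : m ≤ G.degree v) :
    ∃ T : Finset V, T.card = m + 1 ∧ ∀ u ∈ T, ∃ x ∈ T, G.Adj u x := by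
  obtain ⟨A, hAN, hAcard⟩ := exists_subset_card_eq (s := G.neighborFinset v) (n := m)
    (by rwa [card_neighborFinset_eq_degree])
  have hvA : v ∉ A := fun hv => G.notMem_neighborFinset_self v (hAN hv)
  refine ⟨insert v A, by rw [card_insert_of_notMem hvA, hAcard], fun u hu => ?_⟩
  rcases mem_insert.mp hu with rfl | huA
  · obtain ⟨x, hx⟩ := card_pos.mp (hAcard ▸ hm : 0 < A.card)
    exact ⟨x, mem_insert_of_mem hx, (G.mem_neighborFinset u x).mp (hAN hx)⟩
  · exact ⟨v, mem_insert_self v A, ((G.mem_neighborFinset v u).mp (hAN huA)).symm⟩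

end SimpleGraph

theorem stmt_8_general {V : Type*} [Fintype V] [DecidableEq V] (G : SimpleGraph V)
    [DecidableRel G.Adj] (k k' : ℕ) (hkk' : k + 1 ≤ k')
    (hδ : k' + 1 ≤ G.minDegree) :
    G.kkkDomNum k k' 1 ≤ Fintype.card V - G.minDegree + k' - 1 := by
  have : Nonempty V := by
    by_contra hV
    have := not_nonempty_iff.mp hV
    rw [G.minDegree_of_subsingleton] at hδ
    omega
  obtain ⟨v, hv⟩ := G.exists_minimal_degree_vertex
  obtain ⟨T, hTcard, hT⟩ :=
    G.exists_card_eq_forall_exists_adj v (m := G.minDegree - k') (by omega) (by omega)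
  have hdom : G.IsKkkDomSet k k' 1 Tᶜ := G.isKkkDomSet_compl hT (by omega) (by omega)
  calc G.kkkDomNum k k' 1 ≤ Tᶜ.card := G.kkkDomNum_le_card hdom
    _ ≤ Fintype.card V - G.minDegree + k' - 1 := by rw [card_compl, hTcard]; omega

/-- If k, k' ≥ 1 with k' ≥ k + 1 and δ(G) ≥ k' + 1, then
γ_{(k,k',1)}(G) ≤ n − δ + k' − 1. -/
theorem stmt_8 {V : Type*} [Fintype V] [DecidableEq V] (G : SimpleGraph V)
    [DecidableRel G.Adj] (k k' : ℕ) (hk : 1 ≤ k) (hkk' : k + 1 ≤ k')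
    (hδ : k' + 1 ≤ G.minDegree) :
    G.kkkDomNum k k' 1 ≤ Fintype.card V - G.minDegree + k' - 1 :=
  stmt_8_general G k k' hkk' hδ
end
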